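/- Let 𝒢 be a G-groupoid over M (a groupoid with a free G-action by automorphisms), with quotient groupoid 𝒢₀ over M₀ and projection π : 𝒢 → 𝒢₀, and source map s : 𝒢 → M. Then the map S : 𝒢 → 𝒢₀ ×_{M₀} M, S(y) = (π(y), s(y)), taking values in {(y₀,x) : σ(y₀) = p(x)}, is injective; moreover S is surjective whenever the G-action on each fibre of p : M → M₀ is transitive (i.e. p is a set-theoretic principal G-bundle) and π is surjective onto each σ-fibre appropriately, in particular S is a bijection when 𝒢 → 𝒢₀ is a principal G-bundle. -/
import Mathlib


/-- A (set-theoretic) groupoid over a base `M`: source, target, units, inversion, and a partial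
multiplication `mul g h` defined when `src g = tgt h`, satisfying the usual groupoid axioms. -/
structure SGroupoid (G : Type*) (M : Type*) where
  src : G → M
  tgt : G → M
  unit : M → G
  inv : G → G
  mul : (g h : G) → src g = tgt h → G
  src_unit : ∀ x, src (unit x) = x
  tgt_unit : ∀ x, tgt (unit x) = x
  src_mul : ∀ g h hc, src (mul g h hc) = src h
  tgt_mul : ∀ g h hc, tgt (mul g h hc) = tgt g
  massoc : ∀ g h k (hgh : src g = tgt h) (hhk : src h = tgt k)
      (h1 : src (mul g h hgh) = tgt k) (h2 : src g = tgt (mul h k hhk)),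
      mul (mul g h hgh) k h1 = mul g (mul h k hhk) h2
  mul_unit : ∀ g (hc : src g = tgt (unit (src g))), mul g (unit (src g)) hc = g
  unit_mul : ∀ g (hc : src (unit (tgt g)) = tgt g), mul (unit (tgt g)) g hc = g
  src_inv : ∀ g, src (inv g) = tgt g
  tgt_inv : ∀ g, tgt (inv g) = src g
  mul_inv : ∀ g (hc : src g = tgt (inv g)), mul g (inv g) hc = unit (tgt g)
  inv_mul : ∀ g (hc : src (inv g) = tgt g), mul (inv g) g hc = unit (src g)

/-- The orbit relation of a group action. -/
def orbitRel {A Gr : Type*} (act : Gr → A → A) : A → A → Prop := fun a b => ∃ g, act g a = b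

/-- For a `G`-groupoid `𝒢` over `M` (free `G`-action by automorphisms), with
quotient groupoid `𝒢₀` over `M₀`, projections `π, p` and source `s`, the map
`𝒮(y) = (π y, s y) ∈ 𝒢₀ ×_{M₀} M` is injective; and it is bijective when the `G`-action is
transitive on the fibres of `p : M → M₀` (i.e. `p` is a set-theoretic principal `G`-bundle),
in particular when `𝒢 → 𝒢₀` is a principal `G`-bundle. -/
theorem stmt5 {Γ M Gr : Type*} [Group Gr] (S : SGroupoid Γ M)
    (Φ : Gr → Γ → Γ) (φ : Gr → M → M)
    (hΦone : ∀ y, Φ 1 y = y) (hΦmul : ∀ g g' y, Φ g (Φ g' y) = Φ (g * g') y)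
    (hφone : ∀ x, φ 1 x = x) (hφmul : ∀ g g' x, φ g (φ g' x) = φ (g * g') x)
    (hΦfree : ∀ g y, Φ g y = y → g = 1)
    (hφfree : ∀ g x, φ g x = x → g = 1)
    (hsrc : ∀ g y, S.src (Φ g y) = φ g (S.src y))
    (htgt : ∀ g y, S.tgt (Φ g y) = φ g (S.tgt y))
    (hunit : ∀ g x, Φ g (S.unit x) = S.unit (φ g x))
    (hinv : ∀ g y, Φ g (S.inv y) = S.inv (Φ g y))
    (hmul : ∀ g y y' (hc : S.src y = S.tgt y') (hc' : S.src (Φ g y) = S.tgt (Φ g y')),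
      Φ g (S.mul y y' hc) = S.mul (Φ g y) (Φ g y') hc')
    (S0 : SGroupoid (Quot (orbitRel Φ)) (Quot (orbitRel φ)))
    (hsrc0 : ∀ y, S0.src (Quot.mk (orbitRel Φ) y) = Quot.mk (orbitRel φ) (S.src y))
    (htgt0 : ∀ y, S0.tgt (Quot.mk (orbitRel Φ) y) = Quot.mk (orbitRel φ) (S.tgt y)) :
    Function.Injective
      (fun y : Γ =>
        (⟨(Quot.mk (orbitRel Φ) y, S.src y), hsrc0 y⟩ :
          {z : Quot (orbitRel Φ) × M // S0.src z.1 = Quot.mk (orbitRel φ) z.2})) ∧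
    ((∀ x x', Quot.mk (orbitRel φ) x = Quot.mk (orbitRel φ) x' → ∃ g, φ g x = x') →
      Function.Bijective
        (fun y : Γ =>
          (⟨(Quot.mk (orbitRel Φ) y, S.src y), hsrc0 y⟩ :
            {z : Quot (orbitRel Φ) × M // S0.src z.1 = Quot.mk (orbitRel φ) z.2}))) := by

  have hequiv : Equivalence (orbitRel Φ) := by
    constructor
    · intro a; exact ⟨1, hΦone a⟩
    · rintro a b ⟨g, rfl⟩; exact ⟨g⁻¹, by rw [hΦmul, inv_mul_cancel, hΦone]⟩
    · rintro a b c ⟨g, rfl⟩ ⟨g', rfl⟩; exact ⟨g' * g, (hΦmul g' g a).symm⟩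
  have hinj : Function.Injective
      (fun y : Γ =>
        (⟨(Quot.mk (orbitRel Φ) y, S.src y), hsrc0 y⟩ :
          {z : Quot (orbitRel Φ) × M // S0.src z.1 = Quot.mk (orbitRel φ) z.2})) := by
    intro y y' h
    have h1 : Quot.mk (orbitRel Φ) y = Quot.mk (orbitRel Φ) y' :=
      congrArg (fun z => z.1.1) h
    have h2 : S.src y = S.src y' := congrArg (fun z => z.1.2) h
    obtain ⟨g, hg⟩ := hequiv.eqvGen_iff.mp (Quot.eqvGen_exact h1)
    have : φ g (S.src y) = S.src y := by
      rw [← hsrc g y, hg, ← h2]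
    have := hφfree g _ this
    rw [← hg, this, hΦone]
  refine ⟨hinj, fun htrans => ⟨hinj, ?_⟩⟩
  rintro ⟨⟨y0, x⟩, hyx⟩
  obtain ⟨y, rfl⟩ := Quot.exists_rep y0
  rw [hsrc0] at hyx
  obtain ⟨g, hg⟩ := htrans _ _ hyx
  refine ⟨Φ g y, Subtype.ext (Prod.ext ?_ ?_)⟩
  · exact (Quot.sound ⟨g, rfl⟩).symm
  · simpa [hsrc] using hg
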